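/- Let (P, x_L, x_R) be a finite oriented poset with weight function w into a commutative ring R, and let S' be the set of lower sets I of P satisfying (x_L ∈ I implies x_R ∈ I). Then loop_↗(M_w(P↗)) = [[Σ_{I ∈ S'} w(I), −Σ_{I ∈ S', x_R ∈ I} w(I)], [Σ_{I ∈ S', x_R ∉ I} w(I), 0]]. In other words, loop_↗ applied to the up weight matrix of (P, x_L, x_R) equals the down weight matrix of the source-looped oriented poset ▷(P↗), obtained by adding the relation x_R ≤ x_L to P and taking both distinguished vertices to be x_R. -/
import Mathlib


open Classical Relation

noncomputable section

variable {R : Type*} [CommRing R]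

/-- A finite set `I` is a lower set (order ideal) for the relation `r`. -/
def IsLowerSetRel {α : Type*} (r : α → α → Prop) (I : Finset α) : Prop :=
  ∀ x ∈ I, ∀ y, r y x → y ∈ I

/-- The sum of the weights `∏ i ∈ I, w i` over all lower sets `I` of the relation `r`
satisfying the condition `C`.  Taking `C = fun _ => True` gives the weight polynomial. -/
def wSum {α : Type*} [Fintype α] (r : α → α → Prop) (w : α → R) (C : Finset α → Prop) : R :=
  ∑ I ∈ Finset.univ.filter (fun I : Finset α => IsLowerSetRel r I ∧ C I), ∏ i ∈ I, w i

/-- The down weight matrix `M_w(P↘)` of an oriented poset `(P, xL, xR)`. -/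
def downMat {α : Type*} [Fintype α] (r : α → α → Prop) (w : α → R) (xL xR : α) :
    Matrix (Fin 2) (Fin 2) R :=
  !![wSum r w (fun _ => True), -wSum r w (fun I => xR ∈ I);
     wSum r w (fun I => xL ∉ I), -wSum r w (fun I => xR ∈ I ∧ xL ∉ I)]

/-- The up weight matrix `M_w(P↗)` of an oriented poset `(P, xL, xR)`. -/
def upMat {α : Type*} [Fintype α] (r : α → α → Prop) (w : α → R) (xL xR : α) :
    Matrix (Fin 2) (Fin 2) R :=
  !![wSum r w (fun I => xR ∈ I), wSum r w (fun I => xR ∉ I);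
     wSum r w (fun I => xR ∈ I ∧ xL ∉ I), wSum r w (fun I => xR ∉ I ∧ xL ∉ I)]

/-- The order relation of the glued poset `P↘Q` on the disjoint union `P ⊔ Q`:
elements of `P` (resp. `Q`) compare as in `P` (resp. `Q`), an element `a ∈ Q` lies below
`b ∈ P` iff `a ≤ yL` in `Q` and `xR ≤ b` in `P`, and no element of `P` lies below an
element of `Q`. -/
def glueDown {α β : Type*} (rP : α → α → Prop) (rQ : β → β → Prop) (xR : α) (yL : β) :
    α ⊕ β → α ⊕ β → Prop
  | .inl a, .inl b => rP a b
  | .inr a, .inr b => rQ a b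
  | .inr a, .inl b => rQ a yL ∧ rP xR b
  | .inl _, .inr _ => False

/-- The order relation of the glued poset `P↗Q` on the disjoint union `P ⊔ Q`:
elements of `P` (resp. `Q`) compare as in `P` (resp. `Q`), an element `a ∈ P` lies below
`b ∈ Q` iff `a ≤ xR` in `P` and `yL ≤ b` in `Q`, and no element of `Q` lies below an
element of `P`. -/
def glueUp {α β : Type*} (rP : α → α → Prop) (rQ : β → β → Prop) (xR : α) (yL : β) :
    α ⊕ β → α ⊕ β → Prop
  | .inl a, .inl b => rP a b
  | .inr a, .inr b => rQ a b
  | .inl a, .inr b => rP a xR ∧ rQ yL b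
  | .inr _, .inl _ => False
/-- `loop_↗` on 2×2 matrices: `[[a,b],[c,d]] ↦ [[a+d, −a],[d, 0]]`. -/
def loopUpM (M : Matrix (Fin 2) (Fin 2) R) : Matrix (Fin 2) (Fin 2) R :=
  !![M 0 0 + M 1 1, -(M 0 0); M 1 1, 0]


lemma wSum_congr' {α : Type*} [Fintype α] (r r' : α → α → Prop) (w : α → R)
    (C C' : Finset α → Prop)
    (h : ∀ I : Finset α, (IsLowerSetRel r I ∧ C I) ↔ (IsLowerSetRel r' I ∧ C' I)) :
    wSum r w C = wSum r' w C' := by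
  unfold wSum
  congr 1
  apply Finset.filter_congr
  intro I _
  exact h I

lemma lower_loop_iff {α : Type*} [PartialOrder α] (xL xR : α) (I : Finset α) :
    IsLowerSetRel (ReflTransGen (fun a b : α => a ≤ b ∨ (a = xR ∧ b = xL))) I ↔
      (IsLowerSetRel ((· ≤ ·) : α → α → Prop) I ∧ (xL ∈ I → xR ∈ I)) := by
  constructor
  · intro h
    exact ⟨fun x hx y hyx => h x hx y (ReflTransGen.single (Or.inl hyx)),
      fun hL => h xL hL xR (ReflTransGen.single (Or.inr ⟨rfl, rfl⟩))⟩
  · rintro ⟨h, hLR⟩ x hx y hyx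
    revert hx
    induction hyx with
    | refl => exact id
    | @tail b c _ hbc ih =>
      intro hc
      rcases hbc with hle | ⟨rfl, rfl⟩
      · exact ih (h c hc b hle)
      · exact ih (hLR hc)

lemma wSum_split {α : Type*} [Fintype α] [PartialOrder α] (w : α → R) (xL xR : α) :
    wSum ((· ≤ ·) : α → α → Prop) w (fun I => xL ∈ I → xR ∈ I) =
      wSum (· ≤ ·) w (fun I => xR ∈ I) + wSum (· ≤ ·) w (fun I => xR ∉ I ∧ xL ∉ I) := by
  unfold wSum
  rw [Finset.sum_filter, Finset.sum_filter, Finset.sum_filter, ← Finset.sum_add_distrib]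
  refine Finset.sum_congr rfl fun I _ => ?_
  beta_reduce
  by_cases hL : IsLowerSetRel ((· ≤ ·) : α → α → Prop) I <;>
    by_cases hR : xR ∈ I <;> by_cases hX : xL ∈ I <;>
    simp [hL, hR, hX]

/-- `loop_↗(M_w(P↗))` is the matrix of sums over lower sets `I` with
`xL ∈ I → xR ∈ I`; that is, the down weight matrix of the source-looped oriented poset
`▷(P↗)`, obtained by adding the relation `xR ≤ xL` and taking both vertices to be `xR`. -/
theorem loopUpM_upMat {α : Type*} [Fintype α] [PartialOrder α] (w : α → R) (xL xR : α) :
    loopUpM (upMat (· ≤ ·) w xL xR) =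
      !![wSum (· ≤ ·) w (fun I => xL ∈ I → xR ∈ I),
         -wSum (· ≤ ·) w (fun I => (xL ∈ I → xR ∈ I) ∧ xR ∈ I);
         wSum (· ≤ ·) w (fun I => (xL ∈ I → xR ∈ I) ∧ xR ∉ I), 0] ∧
    loopUpM (upMat (· ≤ ·) w xL xR) =
      downMat (ReflTransGen (fun a b : α => a ≤ b ∨ (a = xR ∧ b = xL))) w xR xR := by
  have key : ∀ C : Finset α → Prop,
      wSum (ReflTransGen (fun a b : α => a ≤ b ∨ (a = xR ∧ b = xL))) w C =
        wSum ((· ≤ ·) : α → α → Prop) w (fun I => (xL ∈ I → xR ∈ I) ∧ C I) := by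
    intro C
    apply wSum_congr'
    intro I
    rw [lower_loop_iff]
    tauto
  have h4 : wSum (ReflTransGen (fun a b : α => a ≤ b ∨ (a = xR ∧ b = xL))) w
      (fun _ => False) = 0 := by
    rw [key]
    unfold wSum
    convert Finset.sum_empty
    ext I
    simp only [Finset.mem_filter, Finset.mem_univ, true_and, Finset.notMem_empty, iff_false]
    tauto
  have e1 : loopUpM (upMat ((· ≤ ·) : α → α → Prop) w xL xR) =
      !![wSum (· ≤ ·) w (fun I => xL ∈ I → xR ∈ I),
         -wSum (· ≤ ·) w (fun I => (xL ∈ I → xR ∈ I) ∧ xR ∈ I);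
         wSum (· ≤ ·) w (fun I => (xL ∈ I → xR ∈ I) ∧ xR ∉ I), 0] := by
    have h1 : wSum ((· ≤ ·) : α → α → Prop) w (fun I => xR ∈ I) =
        wSum (· ≤ ·) w (fun I => (xL ∈ I → xR ∈ I) ∧ xR ∈ I) := by
      apply wSum_congr'; intro I; tauto
    have h2 : wSum ((· ≤ ·) : α → α → Prop) w (fun I => xR ∉ I ∧ xL ∉ I) =
        wSum (· ≤ ·) w (fun I => (xL ∈ I → xR ∈ I) ∧ xR ∉ I) := by
      apply wSum_congr'; intro I; constructor <;> rintro ⟨hl, h⟩ <;> exact ⟨hl, by tauto⟩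
    unfold loopUpM upMat
    ext i j
    fin_cases i <;> fin_cases j <;>
      simp [Matrix.cons_val_zero, Matrix.cons_val_one, Matrix.head_cons, wSum_split w xL xR,
        h1, h2]
  refine ⟨e1, ?_⟩
  rw [e1]
  have hA : wSum (ReflTransGen (fun a b : α => a ≤ b ∨ (a = xR ∧ b = xL))) w
      (fun _ => True) = wSum (· ≤ ·) w (fun I => xL ∈ I → xR ∈ I) := by
    rw [key]; apply wSum_congr'; intro I; tauto
  have hB : wSum (ReflTransGen (fun a b : α => a ≤ b ∨ (a = xR ∧ b = xL))) w
      (fun I => xR ∈ I) = wSum (· ≤ ·) w (fun I => (xL ∈ I → xR ∈ I) ∧ xR ∈ I) := key _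
  have hC : wSum (ReflTransGen (fun a b : α => a ≤ b ∨ (a = xR ∧ b = xL))) w
      (fun I => xR ∉ I) = wSum (· ≤ ·) w (fun I => (xL ∈ I → xR ∈ I) ∧ xR ∉ I) := key _
  unfold downMat
  ext i j
  fin_cases i <;> fin_cases j <;>
    simp [hA, hB, hC, h4]
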